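/- For any fixed integer l ≥ 0 and any R > 0 there exists a constant C > 0 such that for all integers n > l and all r ∈ (0, R], | f_{nl}(r) − J_{2l+1}(√(8r)) / √(8r) | ≤ C r^{3/4} n^{−2}. -/

import Mathlib

open MeasureTheory Metric Set

noncomputable section

/-- The associated Laguerre polynomial `L_k^α(x) = ∑_{i=0}^{k} (-1)^i C(k+α, k-i) x^i / i!`. -/
def laguerre (k α : ℕ) (x : ℝ) : ℝ :=
  ∑ i ∈ Finset.range (k + 1),
    (-1 : ℝ) ^ i * (Nat.choose (k + α) (k - i)) * x ^ i / (Nat.factorial i)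

/-- The normalization constant `A_{nl} = 2^{l-1} (n-l-1)! / (n+l)!`. -/
def coulombA (n l : ℕ) : ℝ :=
  (2 : ℝ) ^ ((l : ℤ) - 1) * (Nat.factorial (n - l - 1)) / (Nat.factorial (n + l))

/-- The radial Coulomb eigenfunction `f_{nl}(r) = A_{nl} e^{-r/n} r^l L_{n-l-1}^{2l+1}(2r/n)`. -/
def fnl (n l : ℕ) (r : ℝ) : ℝ :=
  coulombA n l * Real.exp (-r / n) * r ^ l * laguerre (n - l - 1) (2 * l + 1) (2 * r / n)

/-- The Bessel function of the first kind of integer order `ν`. -/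
def besselJ (ν : ℕ) (x : ℝ) : ℝ :=
  ∑' j : ℕ, (-1 : ℝ) ^ j / ((Nat.factorial j) * (Nat.factorial (j + ν))) * (x / 2) ^ (2 * j + ν)

/-- The Bessel profile `J_{2l+1}(√(8r)) / √(8r)`. -/
def besselProfile (l : ℕ) (r : ℝ) : ℝ :=
  besselJ (2 * l + 1) (Real.sqrt (8 * r)) / Real.sqrt (8 * r)

/-!
Both sides are `2^(l-1) r^l` times a power series in `-r`: the Cauchy product of the exponential
series with the Laguerre polynomial gives the coefficients `fnlCoeff n l j`, and the Bessel series
gives `besselCoeff l j = 2^j / (j! (j+2l+1)!)`. These agree for `j = 0, 1`, and for `j ≥ 2` they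
differ by `O(poly(j) 3^j / (j! n²))`: in `fnlCoeff n l j` the top term is `besselCoeff l j` times
`(n-l-1)_j / n^j = ∏ (1 - (l+1+x)/n)`, whose first-order deviation from `1` is cancelled exactly
by the next term, while all lower terms carry a factor `n⁻²`. Summing the series gives a bound
`C' r^(l+2) / n²` on `(0, R]`, and `r^(l+2) ≤ R^(l+5/4) r^(3/4)`.
-/

open scoped Nat

section PowerSeries

variable {a : ℕ → ℝ} {K B : ℝ}

theorem norm_mul_pow_le_of_abs_le (ha : ∀ m, |a m| ≤ K * B ^ m / m !) (x : ℝ) (m : ℕ) :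
    ‖a m * x ^ m‖ ≤ K * ((B * |x|) ^ m / m !) :=
  calc ‖a m * x ^ m‖ = |a m| * |x| ^ m := by rw [Real.norm_eq_abs, abs_mul, abs_pow]
    _ ≤ K * B ^ m / m ! * |x| ^ m := by gcongr; exact ha m
    _ = K * ((B * |x|) ^ m / m !) := by ring

theorem summable_norm_mul_pow_of_abs_le (ha : ∀ m, |a m| ≤ K * B ^ m / m !) (x : ℝ) :
    Summable fun m => ‖a m * x ^ m‖ :=
  .of_nonneg_of_le (fun _ => norm_nonneg _) (norm_mul_pow_le_of_abs_le ha x)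
    ((Real.summable_pow_div_factorial (B * |x|)).mul_left K)

theorem abs_tsum_mul_pow_le (ha : ∀ m, |a m| ≤ K * B ^ m / m !) (x : ℝ) :
    |∑' m, a m * x ^ m| ≤ K * Real.exp (B * |x|) := by
  have hexp : HasSum (fun m => K * ((B * |x|) ^ m / m !)) (K * Real.exp (B * |x|)) := by
    rw [Real.exp_eq_exp_ℝ]
    exact (NormedSpace.expSeries_div_hasSum_exp (B * |x|)).mul_left K
  exact tsum_of_norm_bounded hexp (norm_mul_pow_le_of_abs_le ha x)

theorem abs_tsum_mul_pow_le_of_forall_lt_eq_zero (k : ℕ) (hB : 0 ≤ B)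
    (hzero : ∀ j < k, a j = 0) (ha : ∀ m, |a m| ≤ K * B ^ m / m !) (x : ℝ) :
    |∑' m, a m * x ^ m| ≤ K * B ^ k * |x| ^ k * Real.exp (B * |x|) := by
  have hK : 0 ≤ K := by simpa using (abs_nonneg _).trans (ha 0)
  have hshift : ∑' m, a m * x ^ m = x ^ k * ∑' m, a (m + k) * x ^ m := by
    rw [← ((summable_norm_mul_pow_of_abs_le ha x).of_norm).sum_add_tsum_nat_add k,
      Finset.sum_eq_zero fun j hj => by rw [hzero j (Finset.mem_range.mp hj), zero_mul],
      zero_add, ← tsum_mul_left]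
    exact tsum_congr fun m => by ring
  have ha' : ∀ m, |a (m + k)| ≤ K * B ^ k * B ^ m / m ! := fun m =>
    calc |a (m + k)| ≤ K * B ^ (m + k) / (m + k)! := ha _
      _ ≤ K * B ^ (m + k) / m ! := by gcongr; exact Nat.le_add_right m k
      _ = K * B ^ k * B ^ m / m ! := by ring
  calc |∑' m, a m * x ^ m| = |x| ^ k * |∑' m, a (m + k) * x ^ m| := by
        rw [hshift, abs_mul, abs_pow]
    _ ≤ |x| ^ k * (K * B ^ k * Real.exp (B * |x|)) := by
        gcongr; exact abs_tsum_mul_pow_le ha' x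
    _ = K * B ^ k * |x| ^ k * Real.exp (B * |x|) := by ring

theorem tsum_mul_pow_mul_tsum_mul_pow {b : ℕ → ℝ} {x : ℝ}
    (ha : Summable fun m => ‖a m * x ^ m‖) (hb : Summable fun m => ‖b m * x ^ m‖) :
    (∑' m, a m * x ^ m) * ∑' m, b m * x ^ m =
      ∑' j, (∑ i ∈ Finset.range (j + 1), a i * b (j - i)) * x ^ j := by
  rw [tsum_mul_tsum_eq_tsum_sum_range_of_summable_norm ha hb]
  refine tsum_congr fun j => ?_
  rw [Finset.sum_mul]
  refine Finset.sum_congr rfl fun i hi => ?_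
  rw [← pow_mul_pow_sub x (Nat.lt_succ_iff.mp (Finset.mem_range.mp hi))]
  ring

end PowerSeries

section ProdOneSub

variable {ι : Type*} [DecidableEq ι] (s : Finset ι) {u : ι → ℝ}

theorem Finset.one_sub_sum_le_prod_one_sub (h0 : ∀ i ∈ s, 0 ≤ u i)
    (h1 : ∀ i ∈ s, u i ≤ 1) :
    1 - ∑ i ∈ s, u i ≤ ∏ i ∈ s, (1 - u i) := by
  induction s using Finset.induction_on with
  | empty => simp
  | insert a s ha ih =>
    rw [Finset.prod_insert ha, Finset.sum_insert ha]
    have hS : 0 ≤ ∑ i ∈ s, u i := Finset.sum_nonneg fun i hi => h0 i (by simp [hi])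
    have hP := ih (fun i hi => h0 i (by simp [hi])) (fun i hi => h1 i (by simp [hi]))
    have ha0 := h0 a (by simp)
    have ha1 := h1 a (by simp)
    nlinarith [mul_le_mul_of_nonneg_left hP (sub_nonneg.mpr ha1)]

theorem Finset.prod_one_sub_le_one_sub_sum_add_sq (h0 : ∀ i ∈ s, 0 ≤ u i)
    (h1 : ∀ i ∈ s, u i ≤ 1) :
    ∏ i ∈ s, (1 - u i) ≤ 1 - ∑ i ∈ s, u i + (∑ i ∈ s, u i) ^ 2 / 2 := by
  induction s using Finset.induction_on with
  | empty => simp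
  | insert a s ha ih =>
    rw [Finset.prod_insert ha, Finset.sum_insert ha]
    have hP := ih (fun i hi => h0 i (by simp [hi])) (fun i hi => h1 i (by simp [hi]))
    have ha0 := h0 a (by simp)
    have ha1 := h1 a (by simp)
    nlinarith [mul_le_mul_of_nonneg_left hP (sub_nonneg.mpr ha1),
      mul_nonneg ha0 (sq_nonneg (∑ i ∈ s, u i))]

end ProdOneSub

theorem abs_mul_add_sub_one_le_sq {A P Q : ℝ} (hA : 0 ≤ A) (hP : 1 - A ≤ P) (hP' : P ≤ 1)
    (hQ : 1 - A ≤ Q) (hQ' : Q ≤ 1 - A + A ^ 2 / 2) : |A * P + Q - 1| ≤ A ^ 2 := by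
  rw [abs_le]
  constructor <;> nlinarith [mul_le_mul_of_nonneg_left hP hA, mul_le_mul_of_nonneg_left hP' hA]

theorem sum_range_add_div (l n i : ℕ) :
    ∑ x ∈ Finset.range i, ((l : ℝ) + 1 + x) / n = i * (2 * l + i + 1) / (2 * n) := by
  induction i with
  | zero => simp
  | succ i ih =>
    rw [Finset.sum_range_succ, ih]
    push_cast
    ring

theorem sum_two_pow_div_factorial_mul_factorial (j : ℕ) :
    ∑ i ∈ Finset.range (j + 1), (2 : ℝ) ^ i / (i ! * (j - i)!) = 3 ^ j / j ! := by
  rw [show (3 : ℝ) = 2 + 1 by norm_num, add_pow, Finset.sum_div]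
  refine Finset.sum_congr rfl fun i hi => ?_
  rw [Nat.cast_choose ℝ (Nat.lt_succ_iff.mp (Finset.mem_range.mp hi)), one_pow, mul_one]
  field_simp

def laguerreCoeff (n l i : ℕ) : ℝ :=
  2 ^ i * (n - l - 1).descFactorial i / (i ! * (2 * l + 1 + i)! * (n : ℝ) ^ i)

def fnlCoeff (n l j : ℕ) : ℝ :=
  ∑ i ∈ Finset.range (j + 1), laguerreCoeff n l i * ((n : ℝ)⁻¹ ^ (j - i) / (j - i)!)

def besselCoeff (l j : ℕ) : ℝ :=
  2 ^ j / (j ! * (j + 2 * l + 1)!)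

def descFactorialRatio (n l i : ℕ) : ℝ :=
  ∏ x ∈ Finset.range i, (1 - ((l : ℝ) + 1 + x) / n)

theorem laguerreCoeff_nonneg (n l i : ℕ) : 0 ≤ laguerreCoeff n l i := by
  unfold laguerreCoeff; positivity

theorem laguerreCoeff_le {n : ℕ} (hn : 0 < n) (l i : ℕ) :
    laguerreCoeff n l i ≤ 2 ^ i / i ! := by
  have hdesc : ((n - l - 1).descFactorial i : ℝ) ≤ (n : ℝ) ^ i := by
    exact_mod_cast (Nat.descFactorial_le_pow _ i).trans (Nat.pow_le_pow_left (by omega) i)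
  have hfact : (1 : ℝ) ≤ (2 * l + 1 + i)! := Nat.one_le_cast.mpr (Nat.factorial_pos _)
  unfold laguerreCoeff
  rw [div_le_div_iff₀ (by positivity) (by positivity)]
  calc 2 ^ i * ((n - l - 1).descFactorial i : ℝ) * i !
      ≤ 2 ^ i * (n : ℝ) ^ i * i ! := by gcongr
    _ ≤ 2 ^ i * (i ! * (2 * l + 1 + i)! * (n : ℝ) ^ i) := by
      rw [mul_assoc, mul_comm ((n : ℝ) ^ i)]
      gcongr
      exact le_mul_of_one_le_right (by positivity) hfact

theorem laguerreCoeff_eq_zero_of_lt {n l i : ℕ} (hi : n - l - 1 < i) :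
    laguerreCoeff n l i = 0 := by
  simp [laguerreCoeff, Nat.descFactorial_eq_zero_iff_lt.mpr hi]

theorem coulombA_mul_laguerre {n l : ℕ} (hn : l < n) (r : ℝ) :
    coulombA n l * laguerre (n - l - 1) (2 * l + 1) (2 * r / n) =
      (2 : ℝ) ^ ((l : ℤ) - 1) * ∑' i, laguerreCoeff n l i * (-r) ^ i := by
  rw [tsum_eq_sum (s := Finset.range (n - l - 1 + 1)) fun i hi => by
    rw [laguerreCoeff_eq_zero_of_lt (by simpa using hi), zero_mul]]
  unfold coulombA laguerre
  rw [Finset.mul_sum, Finset.mul_sum]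
  refine Finset.sum_congr rfl fun i hi => ?_
  have hik : i ≤ n - l - 1 := Nat.lt_succ_iff.mp (Finset.mem_range.mp hi)
  have hchoose : ((n - l - 1 + (2 * l + 1)).choose (n - l - 1 - i) : ℝ) =
      (n + l)! / ((n - l - 1 - i)! * (2 * l + 1 + i)!) := by
    rw [Nat.cast_choose ℝ (by omega), show n - l - 1 + (2 * l + 1) = n + l by omega,
      show n + l - (n - l - 1 - i) = 2 * l + 1 + i by omega]
  have hdesc : ((n - l - 1).descFactorial i : ℝ) = (n - l - 1)! / (n - l - 1 - i)! := by
    rw [eq_div_iff (by positivity), mul_comm]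
    exact_mod_cast Nat.factorial_mul_descFactorial hik
  rw [laguerreCoeff, hchoose, hdesc, neg_pow, div_pow]
  field_simp
  rw [one_pow, mul_one, mul_pow, neg_pow r]
  ring

theorem exp_neg_div_eq_tsum (n : ℕ) (r : ℝ) :
    Real.exp (-r / n) = ∑' m, (n : ℝ)⁻¹ ^ m / m ! * (-r) ^ m := by
  rw [Real.exp_eq_exp_ℝ, NormedSpace.exp_eq_tsum_div]
  exact tsum_congr fun m => by rw [div_pow, inv_pow]; ring

theorem fnl_eq_tsum {n l : ℕ} (hn : l < n) (r : ℝ) :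
    fnl n l r = (2 : ℝ) ^ ((l : ℤ) - 1) * r ^ l * ∑' j, fnlCoeff n l j * (-r) ^ j := by
  have hn0 : 0 < n := by omega
  have hlag : Summable fun i => ‖laguerreCoeff n l i * (-r) ^ i‖ :=
    summable_norm_mul_pow_of_abs_le (K := 1) (B := 2) (fun i => by
      rw [abs_of_nonneg (laguerreCoeff_nonneg n l i), one_mul]
      exact laguerreCoeff_le hn0 l i) (-r)
  have hexp : Summable fun m => ‖(n : ℝ)⁻¹ ^ m / m ! * (-r) ^ m‖ :=
    summable_norm_mul_pow_of_abs_le (K := 1) (B := (n : ℝ)⁻¹) (fun m => by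
      rw [abs_of_nonneg (by positivity), one_mul]) (-r)
  unfold fnlCoeff
  rw [← tsum_mul_pow_mul_tsum_mul_pow hlag hexp, ← exp_neg_div_eq_tsum, fnl,
    mul_right_comm _ _ (laguerre _ _ _), mul_right_comm _ _ (laguerre _ _ _),
    coulombA_mul_laguerre hn]
  ring

theorem besselProfile_eq_tsum (l : ℕ) {r : ℝ} (hr : 0 < r) :
    besselProfile l r =
      (2 : ℝ) ^ ((l : ℤ) - 1) * r ^ l * ∑' j, besselCoeff l j * (-r) ^ j := by
  have hs2 : (Real.sqrt (8 * r) / 2) ^ 2 = 2 * r := by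
    rw [div_pow, Real.sq_sqrt (by positivity)]; ring
  have htwo : (2 : ℝ) ^ ((l : ℤ) - 1) = 2 ^ l / 2 := by
    rw [zpow_sub₀ two_ne_zero, zpow_one, zpow_natCast]
  rw [besselProfile, besselJ, ← tsum_div_const, ← tsum_mul_left]
  refine tsum_congr fun j => ?_
  rw [show 2 * j + (2 * l + 1) = 2 * (j + l) + 1 by ring, pow_succ, pow_mul, hs2, besselCoeff,
    show j + (2 * l + 1) = j + 2 * l + 1 by ring, htwo, neg_pow r, mul_pow, pow_add]
  field_simp
  ring

theorem fnlCoeff_term_le {n : ℕ} (hn : 0 < n) (l j i : ℕ) :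
    laguerreCoeff n l i * ((n : ℝ)⁻¹ ^ (j - i) / (j - i)!) ≤
      2 ^ i / (i ! * (j - i)!) * (n : ℝ)⁻¹ ^ (j - i) :=
  calc laguerreCoeff n l i * ((n : ℝ)⁻¹ ^ (j - i) / (j - i)!)
      ≤ 2 ^ i / i ! * ((n : ℝ)⁻¹ ^ (j - i) / (j - i)!) := by
        gcongr; exact laguerreCoeff_le hn l i
    _ = 2 ^ i / (i ! * (j - i)!) * (n : ℝ)⁻¹ ^ (j - i) := by ring

theorem fnlCoeff_nonneg (n l j : ℕ) : 0 ≤ fnlCoeff n l j :=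
  Finset.sum_nonneg fun i _ => mul_nonneg (laguerreCoeff_nonneg n l i) (by positivity)

theorem fnlCoeff_le {n : ℕ} (hn : 0 < n) (l j : ℕ) : fnlCoeff n l j ≤ 3 ^ j / j ! := by
  have hinv : (n : ℝ)⁻¹ ≤ 1 := inv_le_one_of_one_le₀ (by exact_mod_cast hn)
  rw [← sum_two_pow_div_factorial_mul_factorial]
  refine Finset.sum_le_sum fun i _ => (fnlCoeff_term_le hn l j i).trans ?_
  exact mul_le_of_le_one_right (by positivity) (pow_le_one₀ (by positivity) hinv)

theorem besselCoeff_nonneg (l j : ℕ) : 0 ≤ besselCoeff l j := by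
  unfold besselCoeff; positivity

theorem besselCoeff_le (l j : ℕ) : besselCoeff l j ≤ 2 ^ j / j ! := by
  unfold besselCoeff
  gcongr
  exact le_mul_of_one_le_right (by positivity) (Nat.one_le_cast.mpr (Nat.factorial_pos _))

theorem fnlCoeff_zero (n l : ℕ) : fnlCoeff n l 0 = besselCoeff l 0 := by
  simp [fnlCoeff, laguerreCoeff, besselCoeff]

theorem fnlCoeff_one {n l : ℕ} (hn : l < n) : fnlCoeff n l 1 = besselCoeff l 1 := by
  have hn0 : (n : ℝ) ≠ 0 := by exact_mod_cast (show n ≠ 0 by omega)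
  have hdesc : ((n - l - 1).descFactorial 1 : ℝ) = n - l - 1 := by
    rw [Nat.descFactorial_one, Nat.sub_sub, Nat.cast_sub (by omega)]; push_cast; ring
  have hfact : ((2 * l + 2)! : ℝ) = (2 * l + 2) * (2 * l + 1)! := by
    rw [Nat.factorial_succ]; push_cast; ring
  simp only [fnlCoeff, laguerreCoeff, besselCoeff, Finset.sum_range_succ, Finset.sum_range_zero,
    hdesc, Nat.descFactorial_zero, Nat.sub_zero, Nat.sub_self, Nat.factorial_zero,
    Nat.factorial_one, pow_zero, pow_one, add_zero, show 2 * l + 1 + 1 = 2 * l + 2 by ring,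
    show 1 + 2 * l + 1 = 2 * l + 2 by ring, hfact]
  field_simp
  ring

theorem fnl_sub_besselProfile_eq_tsum {n l : ℕ} (hn : l < n) {r : ℝ} (hr : 0 < r) :
    fnl n l r - besselProfile l r = (2 : ℝ) ^ ((l : ℤ) - 1) * r ^ l *
      ∑' j, (fnlCoeff n l j - besselCoeff l j) * (-r) ^ j := by
  have hσ := summable_norm_mul_pow_of_abs_le (K := 1) (B := 3) (fun j => by
    rw [abs_of_nonneg (fnlCoeff_nonneg n l j), one_mul]; exact fnlCoeff_le (by omega) l j) (-r)
  have hτ := summable_norm_mul_pow_of_abs_le (K := 1) (B := 2) (fun j => by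
    rw [abs_of_nonneg (besselCoeff_nonneg l j), one_mul]; exact besselCoeff_le l j) (-r)
  rw [fnl_eq_tsum hn, besselProfile_eq_tsum l hr, ← mul_sub, ← hσ.of_norm.tsum_sub hτ.of_norm]
  simp only [sub_mul]

theorem fnlCoeff_eq_besselCoeff_of_lt_two {n l j : ℕ} (hn : l < n) (hj : j < 2) :
    fnlCoeff n l j = besselCoeff l j := by
  interval_cases j
  exacts [fnlCoeff_zero n l, fnlCoeff_one hn]

theorem laguerreCoeff_eq_mul_descFactorialRatio {n l i : ℕ} (hn : 0 < n) (h : i + l ≤ n) :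
    laguerreCoeff n l i = 2 ^ i / (i ! * (2 * l + 1 + i)!) * descFactorialRatio n l i := by
  have hdesc :
      ((n - l - 1).descFactorial i : ℝ) = ∏ x ∈ Finset.range i, ((n : ℝ) - l - 1 - x) := by
    rw [Nat.descFactorial_eq_prod_range, Nat.cast_prod]
    refine Finset.prod_congr rfl fun x hx => ?_
    have := Finset.mem_range.mp hx
    rw [Nat.cast_sub (by omega), Nat.cast_sub (by omega), Nat.cast_sub (by omega)]
    push_cast; ring
  have hprod : ∏ x ∈ Finset.range i, (1 - ((l : ℝ) + 1 + x) / n) =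
      (∏ x ∈ Finset.range i, ((n : ℝ) - l - 1 - x)) / (n : ℝ) ^ i := by
    rw [show (n : ℝ) ^ i = ∏ _x ∈ Finset.range i, (n : ℝ) by simp,
      ← Finset.prod_div_distrib]
    exact Finset.prod_congr rfl fun x _ => by field_simp; ring
  rw [laguerreCoeff, descFactorialRatio, hdesc, hprod]
  ring

theorem fnlCoeff_sub_besselCoeff_eq {n l m : ℕ} (h : m + 2 + l ≤ n) :
    fnlCoeff n l (m + 2) - besselCoeff l (m + 2) =
      ∑ i ∈ Finset.range (m + 1),
          laguerreCoeff n l i * ((n : ℝ)⁻¹ ^ (m + 2 - i) / (m + 2 - i)!) +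
        besselCoeff l (m + 2) * ((∑ x ∈ Finset.range (m + 2), ((l : ℝ) + 1 + x) / n) *
          descFactorialRatio n l (m + 1) + descFactorialRatio n l (m + 2) - 1) := by
  have hn : 0 < n := by omega
  have htop :
      laguerreCoeff n l (m + 2) = besselCoeff l (m + 2) * descFactorialRatio n l (m + 2) := by
    rw [laguerreCoeff_eq_mul_descFactorialRatio hn h, besselCoeff,
      show 2 * l + 1 + (m + 2) = m + 2 + 2 * l + 1 by ring]
  have hnext : laguerreCoeff n l (m + 1) * (n : ℝ)⁻¹ =
      besselCoeff l (m + 2) * (∑ x ∈ Finset.range (m + 2), ((l : ℝ) + 1 + x) / n) *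
        descFactorialRatio n l (m + 1) := by
    rw [laguerreCoeff_eq_mul_descFactorialRatio hn (by omega), besselCoeff, sum_range_add_div,
      show m + 2 + 2 * l + 1 = (2 * l + 1 + (m + 1)) + 1 by ring,
      Nat.factorial_succ (2 * l + 1 + (m + 1)), Nat.factorial_succ (m + 1)]
    push_cast
    field_simp
    ring
  rw [fnlCoeff, Finset.sum_range_succ, Finset.sum_range_succ, htop,
    show m + 2 - (m + 1) = 1 by omega, Nat.sub_self]
  simp only [pow_one, pow_zero, Nat.factorial_zero, Nat.factorial_one, Nat.cast_one, div_one,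
    mul_one]
  linear_combination hnext

theorem sum_range_laguerreCoeff_mul_le {n : ℕ} (hn : 0 < n) (l m : ℕ) :
    ∑ i ∈ Finset.range (m + 1),
        laguerreCoeff n l i * ((n : ℝ)⁻¹ ^ (m + 2 - i) / (m + 2 - i)!) ≤
      3 ^ (m + 2) / (m + 2)! * (n : ℝ)⁻¹ ^ 2 := by
  have hinv : (n : ℝ)⁻¹ ≤ 1 := inv_le_one_of_one_le₀ (by exact_mod_cast hn)
  rw [← sum_two_pow_div_factorial_mul_factorial, Finset.sum_mul]
  calc _ ≤ ∑ i ∈ Finset.range (m + 1), 2 ^ i / (i ! * (m + 2 - i)!) * (n : ℝ)⁻¹ ^ 2 := by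
        refine Finset.sum_le_sum fun i hi => (fnlCoeff_term_le hn l (m + 2) i).trans ?_
        have : 2 ≤ m + 2 - i := by have := Finset.mem_range.mp hi; omega
        exact mul_le_mul_of_nonneg_left (pow_le_pow_of_le_one (by positivity) hinv this)
          (by positivity)
    _ ≤ _ := Finset.sum_le_sum_of_subset_of_nonneg (Finset.range_subset_range.mpr (by omega))
        fun _ _ _ => by positivity

theorem abs_sum_mul_descFactorialRatio_add_sub_one_le {n l m : ℕ} (h : m + 2 + l ≤ n) :
    |(∑ x ∈ Finset.range (m + 2), ((l : ℝ) + 1 + x) / n) * descFactorialRatio n l (m + 1) +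
        descFactorialRatio n l (m + 2) - 1| ≤
      (∑ x ∈ Finset.range (m + 2), ((l : ℝ) + 1 + x) / n) ^ 2 := by
  set u : ℕ → ℝ := fun x => ((l : ℝ) + 1 + x) / n
  have hu0 : ∀ x, 0 ≤ u x := fun x => by positivity
  have hu1 : ∀ x ∈ Finset.range (m + 2), u x ≤ 1 := fun x hx => by
    have := Finset.mem_range.mp hx
    rw [div_le_one (by exact_mod_cast (show 0 < n by omega))]
    exact_mod_cast (show l + 1 + x ≤ n by omega)
  have hsub : Finset.range (m + 1) ⊆ Finset.range (m + 2) :=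
    Finset.range_subset_range.mpr (by omega)
  have hA : ∑ x ∈ Finset.range (m + 1), u x ≤ ∑ x ∈ Finset.range (m + 2), u x :=
    Finset.sum_le_sum_of_subset_of_nonneg hsub fun x _ _ => hu0 x
  refine abs_mul_add_sub_one_le_sq (Finset.sum_nonneg fun x _ => hu0 x) ?_ ?_
    (Finset.one_sub_sum_le_prod_one_sub _ (fun x _ => hu0 x) hu1)
    (Finset.prod_one_sub_le_one_sub_sum_add_sq _ (fun x _ => hu0 x) hu1)
  · change _ ≤ ∏ x ∈ Finset.range (m + 1), (1 - u x)
    linarith [Finset.one_sub_sum_le_prod_one_sub (Finset.range (m + 1)) (fun x _ => hu0 x)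
      (fun x hx => hu1 x (hsub hx))]
  · exact Finset.prod_le_one (fun x hx => sub_nonneg.mpr (hu1 x (hsub hx)))
      (fun x _ => by linarith [hu0 x])

theorem abs_fnlCoeff_sub_besselCoeff_le_of_add_le {n l m : ℕ} (h : m + 2 + l ≤ n) :
    |fnlCoeff n l (m + 2) - besselCoeff l (m + 2)| ≤
      3 ^ (m + 2) * (1 + ((m + 2 : ℕ) * (2 * l + (m + 2 : ℕ) + 1) : ℝ) ^ 2) /
        ((m + 2)! * (n : ℝ) ^ 2) := by
  have hcorr := abs_sum_mul_descFactorialRatio_add_sub_one_le h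
  set A := ∑ x ∈ Finset.range (m + 2), ((l : ℝ) + 1 + x) / n
  set X : ℝ := (m + 2 : ℕ) * (2 * l + (m + 2 : ℕ) + 1)
  have hAX : A = X / (2 * n) := sum_range_add_div l n (m + 2)
  rw [fnlCoeff_sub_besselCoeff_eq h]
  calc _ ≤ 3 ^ (m + 2) / (m + 2)! * (n : ℝ)⁻¹ ^ 2 + besselCoeff l (m + 2) * A ^ 2 := by
        refine (abs_add_le _ _).trans (add_le_add ?_ ?_)
        · rw [abs_of_nonneg (Finset.sum_nonneg fun i _ =>
            mul_nonneg (laguerreCoeff_nonneg n l i) (by positivity))]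
          exact sum_range_laguerreCoeff_mul_le (by omega) l m
        · rw [abs_mul, abs_of_nonneg (besselCoeff_nonneg l _)]
          exact mul_le_mul_of_nonneg_left hcorr (besselCoeff_nonneg l _)
    _ ≤ 3 ^ (m + 2) / (m + 2)! * (n : ℝ)⁻¹ ^ 2 + 2 ^ (m + 2) / (m + 2)! * A ^ 2 := by
        gcongr; exact besselCoeff_le l _
    _ = (3 ^ (m + 2) + 2 ^ (m + 2) * X ^ 2 / 4) / ((m + 2)! * (n : ℝ) ^ 2) := by
        rw [hAX]; field_simp; ring
    _ ≤ _ := by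
        gcongr
        have : (2 : ℝ) ^ (m + 2) ≤ 3 ^ (m + 2) := by gcongr; norm_num
        nlinarith [mul_le_mul_of_nonneg_right this (sq_nonneg X),
          mul_nonneg (pow_nonneg zero_le_two (m + 2)) (sq_nonneg X)]

theorem abs_fnlCoeff_sub_besselCoeff_le {n l : ℕ} (hn : l < n) (j : ℕ) :
    |fnlCoeff n l j - besselCoeff l j| ≤
      3 ^ j * (1 + (j * (2 * l + j + 1) : ℝ) ^ 2) / (j ! * (n : ℝ) ^ 2) := by
  have hn0 : 0 < n := by omega
  rcases Nat.lt_or_ge j 2 with hj | hj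
  · rw [fnlCoeff_eq_besselCoeff_of_lt_two hn hj, sub_self, abs_zero]
    positivity
  obtain ⟨m, rfl⟩ := Nat.exists_eq_add_of_le' hj
  by_cases h : m + 2 + l ≤ n
  · exact abs_fnlCoeff_sub_besselCoeff_le_of_add_le h
  have hτ : besselCoeff l (m + 2) ≤ 3 ^ (m + 2) / (m + 2)! :=
    (besselCoeff_le l _).trans (by gcongr; norm_num)
  -- Here `n ≤ j + l ≤ j (2l + j + 1)`, so the crude bound already carries the factor `n⁻²`.
  have hnX : (n : ℝ) ≤ (m + 2 : ℕ) * (2 * l + (m + 2 : ℕ) + 1) := by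
    exact_mod_cast (show n ≤ (m + 2) * (2 * l + (m + 2) + 1) by nlinarith)
  calc |fnlCoeff n l (m + 2) - besselCoeff l (m + 2)| ≤ 3 ^ (m + 2) / (m + 2)! :=
        abs_sub_le_of_nonneg_of_le (fnlCoeff_nonneg n l _) (fnlCoeff_le hn0 l _)
          (besselCoeff_nonneg l _) hτ
    _ ≤ _ := by
        rw [div_le_div_iff₀ (by positivity) (by positivity)]
        have : (n : ℝ) ^ 2 ≤ 1 + ((m + 2 : ℕ) * (2 * l + (m + 2 : ℕ) + 1) : ℝ) ^ 2 := by
          nlinarith [pow_le_pow_left₀ (by positivity) hnX 2]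
        calc 3 ^ (m + 2) * ((m + 2)! * (n : ℝ) ^ 2) = 3 ^ (m + 2) * (n : ℝ) ^ 2 * (m + 2)! := by
              ring
          _ ≤ _ := by gcongr

theorem one_add_sq_le_exp (l j : ℕ) :
    1 + (j * (2 * l + j + 1) : ℝ) ^ 2 ≤ 48 * Real.exp 1 * (2 * l + 1) ^ 2 * Real.exp 1 ^ j := by
  have hX : (j * (2 * l + j + 1) : ℝ) ≤ (2 * l + 1) * (j + 1) ^ 2 := by
    have hl := l.cast_nonneg (α := ℝ)
    have hj := j.cast_nonneg (α := ℝ)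
    nlinarith [mul_nonneg hl hj, mul_nonneg hl (mul_nonneg hj hj)]
  have hexp : ((j : ℝ) + 1) ^ 4 ≤ 24 * (Real.exp 1 * Real.exp 1 ^ j) := by
    have := Real.pow_div_factorial_le_exp (x := (j : ℝ) + 1) (by positivity) 4
    rw [← Real.exp_nat_mul, ← Real.exp_add, mul_one, add_comm 1]
    norm_num [Nat.factorial] at this
    linarith
  have h1 : (1 : ℝ) ≤ (2 * l + 1) ^ 2 * (j + 1) ^ 4 :=
    one_le_mul_of_one_le_of_one_le (one_le_pow₀ (by linarith [l.cast_nonneg (α := ℝ)]))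
      (one_le_pow₀ (by linarith [j.cast_nonneg (α := ℝ)]))
  nlinarith [pow_le_pow_left₀ (by positivity) hX 2,
    mul_le_mul_of_nonneg_left hexp (sq_nonneg (2 * (l : ℝ) + 1))]

theorem abs_fnlCoeff_sub_besselCoeff_le_exp {n l : ℕ} (hn : l < n) (j : ℕ) :
    |fnlCoeff n l j - besselCoeff l j| ≤
      48 * Real.exp 1 * (2 * l + 1) ^ 2 / (n : ℝ) ^ 2 * (3 * Real.exp 1) ^ j / j ! := by
  refine (abs_fnlCoeff_sub_besselCoeff_le hn j).trans ?_
  calc _ ≤ 3 ^ j * (48 * Real.exp 1 * (2 * l + 1) ^ 2 * Real.exp 1 ^ j) /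
        (j ! * (n : ℝ) ^ 2) := by
        gcongr; exact one_add_sq_le_exp l j
    _ = _ := by ring

theorem pow_add_two_le_rpow_mul_rpow {r R : ℝ} (hr : 0 < r) (hrR : r ≤ R) (l : ℕ) :
    r ^ (l + 2) ≤ R ^ ((l : ℝ) + 5 / 4) * r ^ ((3 : ℝ) / 4) := by
  have hsplit : ((l + 2 : ℕ) : ℝ) = ((l : ℝ) + 5 / 4) + 3 / 4 := by push_cast; ring
  rw [← Real.rpow_natCast, hsplit, Real.rpow_add hr]
  gcongr

/-- For fixed `l` and `R > 0` there is `C > 0` such that for all integers `n > l` and all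
`r ∈ (0, R]`, `|f_{nl}(r) − J_{2l+1}(√(8r))/√(8r)| ≤ C r^{3/4} n^{-2}`. -/
theorem fnl_sub_besselProfile_bound (l : ℕ) (R : ℝ) (hR : 0 < R) :
    ∃ C : ℝ, 0 < C ∧ ∀ n : ℕ, l < n → ∀ r ∈ Set.Ioc (0 : ℝ) R,
      |fnl n l r - besselProfile l r| ≤ C * r ^ ((3 : ℝ) / 4) / (n : ℝ) ^ 2 := by
  set c : ℝ := (2 : ℝ) ^ ((l : ℤ) - 1)
  set B := 3 * Real.exp 1
  set K := 48 * Real.exp 1 * (2 * l + 1) ^ 2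
  refine ⟨c * K * B ^ 2 * Real.exp (B * R) * R ^ ((l : ℝ) + 5 / 4), by positivity, ?_⟩
  rintro n hn r ⟨hr, hrR⟩
  have hseries := abs_tsum_mul_pow_le_of_forall_lt_eq_zero 2 (by positivity)
    (fun j hj => sub_eq_zero.mpr (fnlCoeff_eq_besselCoeff_of_lt_two hn hj))
    (abs_fnlCoeff_sub_besselCoeff_le_exp hn) (-r)
  rw [abs_neg, abs_of_pos hr] at hseries
  calc |fnl n l r - besselProfile l r|
      = c * r ^ l * |∑' j, (fnlCoeff n l j - besselCoeff l j) * (-r) ^ j| := by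
        rw [fnl_sub_besselProfile_eq_tsum hn hr, abs_mul, abs_of_pos (by positivity)]
    _ ≤ c * r ^ l * (K / (n : ℝ) ^ 2 * B ^ 2 * r ^ 2 * Real.exp (B * r)) := by gcongr
    _ = c * K * B ^ 2 * Real.exp (B * r) * r ^ (l + 2) / (n : ℝ) ^ 2 := by ring
    _ ≤ c * K * B ^ 2 * Real.exp (B * R) * (R ^ ((l : ℝ) + 5 / 4) * r ^ ((3 : ℝ) / 4)) /
          (n : ℝ) ^ 2 := by
        gcongr
        exact pow_add_two_le_rpow_mul_rpow hr hrR l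
    _ = _ := by ring
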